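/- arXiv:2110.08441 — 5 statements merged into one kernel-verified Lean document; each statement's English description precedes it below -/
import Mathlib

section
/- Let 0 < c ≤ 1 ≤ C and 0 < σ₁ ≤ σ₂. There exist constants c′ > 0 and C′, depending only on c and C, such that the following holds. Let T′ ⊆ ℝ², let P : ℝ² → ℝ be a differentiable function with c σ₁ ≤ P_x(p) ≤ C σ₁ and c σ₂ ≤ P_y(p) ≤ C σ₂ for all p ∈ T′, let θ ∈ [−π/4, π/4], let ρ be the counterclockwise rotation of ℝ² by angle θ about the origin, and set Q = P ∘ ρ. Then: (1) max(|Q_x(q)|, |Q_y(q)|) ≤ C′ σ₂ for all q ∈ ρ^{−1}(T′); and (2) either Q_x(q) ≥ c′ σ₂ for all q ∈ ρ^{−1}(T′), or Q_y(q) ≥ c′ σ₂ for all q ∈ ρ^{−1}(T′). -/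
open MeasureTheory Real Set
open scoped ENNReal

noncomputable section

/-- Rotation of the plane by angle `θ` about the origin. -/
def planeRot (θ : ℝ) (p : ℝ × ℝ) : ℝ × ℝ :=
  (Real.cos θ * p.1 - Real.sin θ * p.2, Real.sin θ * p.1 + Real.cos θ * p.2)

/-- The `C`-dilation of the interval `[a,b]` about its centre. -/
def dilInterval (C a b : ℝ) : Set ℝ :=
  Set.Icc ((a + b) / 2 - C * (b - a) / 2) ((a + b) / 2 + C * (b - a) / 2)

/-- The `C`-dilation about its centre of the rectangle obtained by rotating the
axis-parallel closed rectangle `[a₁,b₁] × [a₂,b₂]` by the angle `θ`. -/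
def rectD (C θ a₁ b₁ a₂ b₂ : ℝ) : Set (ℝ × ℝ) :=
  planeRot θ '' (dilInterval C a₁ b₁ ×ˢ dilInterval C a₂ b₂)

/-- A rectangle in the plane: the image of an axis-parallel closed rectangle under a rotation. -/
def IsRectangle (T : Set (ℝ × ℝ)) : Prop :=
  ∃ θ a₁ b₁ a₂ b₂ : ℝ, T = rectD 1 θ a₁ b₁ a₂ b₂

/-- The unit square `[-1,1]²`. -/
def unitSq : Set (ℝ × ℝ) := Set.Icc (-1 : ℝ) 1 ×ˢ Set.Icc (-1 : ℝ) 1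

/-- Fourier transform on `ℝ²`. -/
def FT2 (f : ℝ × ℝ → ℂ) (ξ : ℝ × ℝ) : ℂ :=
  ∫ x : ℝ × ℝ,
    Complex.exp ((((-2) * Real.pi * (x.1 * ξ.1 + x.2 * ξ.2) : ℝ) : ℂ) * Complex.I) * f x

/-- Inverse Fourier transform on `ℝ²`. -/
def FTInv2 (f : ℝ × ℝ → ℂ) (x : ℝ × ℝ) : ℂ :=
  ∫ ξ : ℝ × ℝ,
    Complex.exp (((2 * Real.pi * (x.1 * ξ.1 + x.2 * ξ.2) : ℝ) : ℂ) * Complex.I) * f ξ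

/-- Fourier restriction `R_S f` of `f : ℝ² → ℂ` to a set `S ⊆ ℝ²`. -/
def fres2 (f : ℝ × ℝ → ℂ) (S : Set (ℝ × ℝ)) : ℝ × ℝ → ℂ :=
  FTInv2 (S.indicator (FT2 f))

/-- Fourier transform on `ℝ³`. -/
def FT3 (f : ℝ × ℝ × ℝ → ℂ) (ξ : ℝ × ℝ × ℝ) : ℂ :=
  ∫ x : ℝ × ℝ × ℝ,
    Complex.exp ((((-2) * Real.pi * (x.1 * ξ.1 + x.2.1 * ξ.2.1 + x.2.2 * ξ.2.2) : ℝ) : ℂ)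
      * Complex.I) * f x

/-- Inverse Fourier transform on `ℝ³`. -/
def FTInv3 (f : ℝ × ℝ × ℝ → ℂ) (x : ℝ × ℝ × ℝ) : ℂ :=
  ∫ ξ : ℝ × ℝ × ℝ,
    Complex.exp (((2 * Real.pi * (x.1 * ξ.1 + x.2.1 * ξ.2.1 + x.2.2 * ξ.2.2) : ℝ) : ℂ)
      * Complex.I) * f ξ

/-- The vertical strip `S × ℝ ⊆ ℝ³` over a planar set `S`. -/
def vstrip (S : Set (ℝ × ℝ)) : Set (ℝ × ℝ × ℝ) := {p | (p.1, p.2.1) ∈ S}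

/-- Fourier restriction `R_B f` of `f : ℝ³ → ℂ` to a set `B ⊆ ℝ³`. -/
def fres3 (f : ℝ × ℝ × ℝ → ℂ) (B : Set (ℝ × ℝ × ℝ)) : ℝ × ℝ × ℝ → ℂ :=
  FTInv3 (B.indicator (FT3 f))

/-- `f_S` : Fourier restriction of `f : ℝ³ → ℂ` to the strip `S × ℝ`, `S ⊆ ℝ²`. -/
def fstrip (f : ℝ × ℝ × ℝ → ℂ) (S : Set (ℝ × ℝ)) : ℝ × ℝ × ℝ → ℂ :=
  fres3 f (vstrip S)

/-- The vertical `δ`-neighbourhood of the graph of `φ` above `A ⊆ ℝ²`. -/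
def Ngraph (φ : ℝ × ℝ → ℝ) (δ : ℝ) (A : Set (ℝ × ℝ)) : Set (ℝ × ℝ × ℝ) :=
  {p | (p.1, p.2.1) ∈ A ∧ |p.2.2 - φ (p.1, p.2.1)| < δ}

/-- `φ` is `δ`-flat over `S ⊆ ℝ²`. -/
def DeltaFlat (φ : ℝ × ℝ → ℝ) (δ : ℝ) (S : Set (ℝ × ℝ)) : Prop :=
  ∀ u ∈ S, ∀ v ∈ S, |φ v - φ u - fderiv ℝ φ u (v - u)| ≤ δ

/-- Evaluation of a bivariate polynomial at a point of the plane. -/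
def pev (P : MvPolynomial (Fin 2) ℝ) (p : ℝ × ℝ) : ℝ :=
  MvPolynomial.eval ![p.1, p.2] P

/-- Partial derivative in the first variable. -/
def Pdx (P : MvPolynomial (Fin 2) ℝ) : MvPolynomial (Fin 2) ℝ :=
  MvPolynomial.pderiv (0 : Fin 2) P

/-- Partial derivative in the second variable. -/
def Pdy (P : MvPolynomial (Fin 2) ℝ) : MvPolynomial (Fin 2) ℝ :=
  MvPolynomial.pderiv (1 : Fin 2) P

/-- The Hessian determinant `P_xx P_yy - P_xy²` of a bivariate polynomial. -/
def hessDet (P : MvPolynomial (Fin 2) ℝ) : MvPolynomial (Fin 2) ℝ :=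
  Pdx (Pdx P) * Pdy (Pdy P) - Pdy (Pdx P) ^ 2

/-- All coefficients of `P` are bounded in absolute value by `K`. -/
def CoeffBdd (P : MvPolynomial (Fin 2) ℝ) (K : ℝ) : Prop :=
  ∀ μ : Fin 2 →₀ ℕ, |MvPolynomial.coeff μ P| ≤ K

/-- A bivariate polynomial `φ` is `δ`-flat over `S ⊆ ℝ²`. -/
def PolyFlat (P : MvPolynomial (Fin 2) ℝ) (δ : ℝ) (S : Set (ℝ × ℝ)) : Prop :=
  ∀ u ∈ S, ∀ v ∈ S,
    |pev P v - pev P u - pev (Pdx P) u * (v.1 - u.1) - pev (Pdy P) u * (v.2 - u.2)| ≤ δ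

/-- A differentiable function `g : ℝ → ℝ` is `δ`-flat over an interval `I`. -/
def Flat1 (g : ℝ → ℝ) (δ : ℝ) (I : Set ℝ) : Prop :=
  ∀ x ∈ I, ∀ x₀ ∈ I, |g x - g x₀ - deriv g x₀ * (x - x₀)| ≤ δ



def rotCLM (θ : ℝ) : (ℝ × ℝ) →L[ℝ] (ℝ × ℝ) :=
  (Real.cos θ • (ContinuousLinearMap.fst ℝ ℝ ℝ) - Real.sin θ • (ContinuousLinearMap.snd ℝ ℝ ℝ)).prod
    (Real.sin θ • (ContinuousLinearMap.fst ℝ ℝ ℝ) + Real.cos θ • (ContinuousLinearMap.snd ℝ ℝ ℝ))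

lemma planeRot_eq_rotCLM (θ : ℝ) : planeRot θ = ⇑(rotCLM θ) := by
  funext p
  simp [planeRot, rotCLM, sub_eq_add_neg]

lemma fderiv_comp_rot (P : ℝ × ℝ → ℝ) (hP : Differentiable ℝ P) (θ : ℝ) (q : ℝ × ℝ) (v : ℝ × ℝ) :
    fderiv ℝ (P ∘ planeRot θ) q v = fderiv ℝ P (planeRot θ q) (planeRot θ v) := by
  rw [planeRot_eq_rotCLM, fderiv_comp q (hP _) (rotCLM θ).differentiableAt]
  simp

lemma eval_lin (L : (ℝ × ℝ) →L[ℝ] ℝ) (a b : ℝ) :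
    L (a, b) = a * L (1, 0) + b * L (0, 1) := by
  have : ((a, b) : ℝ × ℝ) = a • ((1 : ℝ), (0 : ℝ)) + b • ((0 : ℝ), (1 : ℝ)) := by
    simp [Prod.ext_iff]
  rw [this, map_add, _root_.map_smul, _root_.map_smul]
  simp

lemma Qx_eq (P : ℝ × ℝ → ℝ) (hP : Differentiable ℝ P) (θ : ℝ) (q : ℝ × ℝ) :
    fderiv ℝ (P ∘ planeRot θ) q (1, 0)
      = cos θ * fderiv ℝ P (planeRot θ q) (1, 0) + sin θ * fderiv ℝ P (planeRot θ q) (0, 1) := by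
  rw [fderiv_comp_rot P hP θ q]
  show fderiv ℝ P (planeRot θ q) (cos θ * 1 - sin θ * 0, sin θ * 1 + cos θ * 0) = _
  rw [show (cos θ * 1 - sin θ * 0, sin θ * 1 + cos θ * 0) = ((cos θ, sin θ) : ℝ × ℝ) by ring_nf]
  exact eval_lin _ _ _

lemma Qy_eq (P : ℝ × ℝ → ℝ) (hP : Differentiable ℝ P) (θ : ℝ) (q : ℝ × ℝ) :
    fderiv ℝ (P ∘ planeRot θ) q (0, 1)
      = -sin θ * fderiv ℝ P (planeRot θ q) (1, 0) + cos θ * fderiv ℝ P (planeRot θ q) (0, 1) := by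
  rw [fderiv_comp_rot P hP θ q]
  show fderiv ℝ P (planeRot θ q) (cos θ * 0 - sin θ * 1, sin θ * 0 + cos θ * 1) = _
  rw [show (cos θ * 0 - sin θ * 1, sin θ * 0 + cos θ * 1) = ((-sin θ, cos θ) : ℝ × ℝ) by ring_nf]
  exact eval_lin _ _ _

theorem statement11 (c C : ℝ) (hc : 0 < c) (hc1 : c ≤ 1) (hC : 1 ≤ C) :
    ∃ c' C' : ℝ, 0 < c' ∧
      ∀ σ₁ σ₂ : ℝ, 0 < σ₁ → σ₁ ≤ σ₂ →
      ∀ (T' : Set (ℝ × ℝ)) (P : ℝ × ℝ → ℝ), Differentiable ℝ P →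
      (∀ p ∈ T', c * σ₁ ≤ fderiv ℝ P p (1, 0) ∧ fderiv ℝ P p (1, 0) ≤ C * σ₁) →
      (∀ p ∈ T', c * σ₂ ≤ fderiv ℝ P p (0, 1) ∧ fderiv ℝ P p (0, 1) ≤ C * σ₂) →
      ∀ θ : ℝ, -(π / 4) ≤ θ → θ ≤ π / 4 →
        (∀ q : ℝ × ℝ, planeRot θ q ∈ T' →
          max |fderiv ℝ (P ∘ planeRot θ) q (1, 0)| |fderiv ℝ (P ∘ planeRot θ) q (0, 1)|
            ≤ C' * σ₂) ∧
        ((∀ q : ℝ × ℝ, planeRot θ q ∈ T' →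
            c' * σ₂ ≤ fderiv ℝ (P ∘ planeRot θ) q (1, 0)) ∨
         (∀ q : ℝ × ℝ, planeRot θ q ∈ T' →
            c' * σ₂ ≤ fderiv ℝ (P ∘ planeRot θ) q (0, 1))) := by
  have hC0 : (0:ℝ) < C := lt_of_lt_of_le one_pos hC
  refine ⟨c^2/(4*C), 2*C, by positivity, ?_⟩
  intro σ₁ σ₂ hσ₁ hσ12 T' P hP hPx hPy θ hθ1 hθ2
  have hσ₂ : 0 < σ₂ := lt_of_lt_of_le hσ₁ hσ12
  have hcos : (1:ℝ)/2 ≤ cos θ := by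
    have habs : |θ| ≤ π/4 := abs_le.2 ⟨hθ1, hθ2⟩
    have h1 : cos (π/4) ≤ cos |θ| := by
      apply Real.cos_le_cos_of_nonneg_of_le_pi (abs_nonneg θ) (by linarith [Real.pi_pos]) habs
    rw [Real.cos_abs] at h1
    rw [Real.cos_pi_div_four] at h1
    have h2 : (1:ℝ) ≤ Real.sqrt 2 := by
      nlinarith [Real.sq_sqrt (by norm_num : (0:ℝ) ≤ 2), Real.sqrt_nonneg 2]
    linarith
  constructor
  · intro q hq
    obtain ⟨hPxl, hPxu⟩ := hPx _ hq
    obtain ⟨hPyl, hPyu⟩ := hPy _ hq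
    rw [Qx_eq P hP θ q, Qy_eq P hP θ q]
    set Px := fderiv ℝ P (planeRot θ q) (1, 0)
    set Py := fderiv ℝ P (planeRot θ q) (0, 1)
    have hPxa : |Px| ≤ C * σ₂ := by
      rw [abs_le]; constructor <;> nlinarith
    have hPya : |Py| ≤ C * σ₂ := by
      rw [abs_le]; constructor <;> nlinarith
    have hcos1 : |cos θ| ≤ 1 := Real.abs_cos_le_one θ
    have hsin1 : |sin θ| ≤ 1 := Real.abs_sin_le_one θ
    have hb : ∀ a b : ℝ, |a| ≤ 1 → |b| ≤ 1 → |a * Px + b * Py| ≤ 2 * C * σ₂ := by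
      intro a b ha hb
      calc |a * Px + b * Py| ≤ |a * Px| + |b * Py| := abs_add_le _ _
        _ = |a| * |Px| + |b| * |Py| := by rw [abs_mul, abs_mul]
        _ ≤ 1 * (C * σ₂) + 1 * (C * σ₂) := by
            have h1 := mul_le_mul ha hPxa (abs_nonneg _) zero_le_one
            have h2 := mul_le_mul hb hPya (abs_nonneg _) zero_le_one
            linarith
        _ = 2 * C * σ₂ := by ring
    exact max_le (hb _ _ hcos1 hsin1) (hb _ _ (by rwa [abs_neg]) hcos1)
  · rcases le_or_gt (c/(4*C)) (sin θ) with hsin | hsin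
    · left
      intro q hq
      obtain ⟨hPxl, hPxu⟩ := hPx _ hq
      obtain ⟨hPyl, hPyu⟩ := hPy _ hq
      rw [Qx_eq P hP θ q]
      set Px := fderiv ℝ P (planeRot θ q) (1, 0)
      set Py := fderiv ℝ P (planeRot θ q) (0, 1)
      have h1 : c/(4*C) * (c*σ₂) ≤ sin θ * Py :=
        mul_le_mul hsin hPyl (by positivity) (le_trans (by positivity) hsin)
      have h2 : (0:ℝ) ≤ cos θ * Px :=
        mul_nonneg (by linarith) (le_trans (by positivity) hPxl)
      have h3 : c/(4*C) * (c*σ₂) = c^2/(4*C)*σ₂ := by ring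
      linarith
    · right
      intro q hq
      obtain ⟨hPxl, hPxu⟩ := hPx _ hq
      obtain ⟨hPyl, hPyu⟩ := hPy _ hq
      rw [Qy_eq P hP θ q]
      set Px := fderiv ℝ P (planeRot θ q) (1, 0)
      set Py := fderiv ℝ P (planeRot θ q) (0, 1)
      have hPx2 : Px ≤ C * σ₂ := by nlinarith
      have h1 : sin θ * Px ≤ c/(4*C) * (C*σ₂) := by
        rcases le_or_gt 0 (sin θ) with h | h
        · exact mul_le_mul hsin.le hPx2 (le_trans (by positivity) hPxl) (by positivity)
        · have : sin θ * Px ≤ 0 := mul_nonpos_of_nonpos_of_nonneg h.le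
            (le_trans (by positivity) hPxl)
          have : (0:ℝ) ≤ c/(4*C) * (C*σ₂) := by positivity
          linarith
      have h2 : (1:ℝ)/2 * (c*σ₂) ≤ cos θ * Py :=
        mul_le_mul hcos hPyl (by positivity) (by linarith)
      have h3 : c/(4*C) * (C*σ₂) = c/4*σ₂ := by field_simp
      have h4 : c^2/(4*C)*σ₂ ≤ c/4*σ₂ := by
        apply mul_le_mul_of_nonneg_right _ hσ₂.le
        rw [div_le_div_iff₀ (by positivity) (by norm_num)]
        nlinarith
      nlinarith

end
end

section
/- For every parallelogram P ⊆ ℝ² there exists a rectangle T such that P ⊆ T ⊆ 3P, where 3P denotes the dilation of P by the factor 3 about the centre of P. -/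
open MeasureTheory Real Set
open scoped ENNReal

noncomputable section

/-!
Write `P = c + [-1,1]u + [-1,1]v` with `|v| ≤ |u|` and rotate so that `u = (r, 0)`; let `w` be
the rotated `v`. The axis-parallel box about `c` with half-widths `r + |w₁|` and `|w₂|` contains
`P`. Since `|w₁| ≤ r`, every point of the box is `c + s u + t w` with `|t| ≤ 1` and
`|s| ≤ (r + 2|w₁|)/r ≤ 3`, so the box lies in `3P`.
-/

open Metric

/-- The parallelogram with centre `c` and half-side vectors `u`, `v`. -/
def parallelogram {E : Type*} [AddCommGroup E] [Module ℝ E] (c u v : E) : Set E :=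
  (fun st : ℝ × ℝ => c + st.1 • u + st.2 • v) '' unitSq

section Parallelogram

variable {E F : Type*} [AddCommGroup E] [Module ℝ E] [AddCommGroup F] [Module ℝ F]

lemma parallelogram_comm (c u v : E) : parallelogram c u v = parallelogram c v u := by
  have hswap : Prod.swap '' unitSq = unitSq := image_swap_prod _ _
  rw [parallelogram, parallelogram]
  conv_rhs => rw [← hswap, image_image]
  congr 1
  funext st
  simp only [Prod.fst_swap, Prod.snd_swap]
  abel

lemma AffineMap.image_parallelogram (f : E →ᵃ[ℝ] F) (c u v : E) :
    f '' parallelogram c u v = parallelogram (f c) (f.linear u) (f.linear v) := by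
  rw [parallelogram, parallelogram, image_image]
  congr 1
  funext st
  rw [add_assoc, add_comm c, ← vadd_eq_add, f.map_vadd, vadd_eq_add, map_add, map_smul,
    map_smul]
  abel

lemma image_dilation_parallelogram (C : ℝ) (c u v : E) :
    (fun p => c + C • (p - c)) '' parallelogram c u v = parallelogram c (C • u) (C • v) := by
  rw [parallelogram, parallelogram, image_image]
  congr 1
  funext st
  module

end Parallelogram

lemma Icc_zero_one_prod_eq_parallelogram :
    Icc (0 : ℝ) 1 ×ˢ Icc (0 : ℝ) 1 =
      parallelogram ((1 / 2, 1 / 2) : ℝ × ℝ) (1 / 2, 0) (0, 1 / 2) := by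
  ext ⟨x, y⟩
  simp only [parallelogram, unitSq, mem_prod, mem_Icc, mem_image, Prod.exists, Prod.ext_iff,
    Prod.fst_add, Prod.snd_add, Prod.smul_fst, Prod.smul_snd, smul_eq_mul]
  constructor
  · rintro ⟨⟨hx₀, hx₁⟩, hy₀, hy₁⟩
    exact ⟨2 * x - 1, 2 * y - 1, ⟨⟨by linarith, by linarith⟩, by linarith, by linarith⟩,
      by ring, by ring⟩
  · rintro ⟨s, t, ⟨⟨hs₀, hs₁⟩, ht₀, ht₁⟩, rfl, rfl⟩
    refine ⟨⟨?_, ?_⟩, ?_, ?_⟩ <;> linarith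

def planeRotₗ (θ : ℝ) : (ℝ × ℝ) →ₗ[ℝ] ℝ × ℝ where
  toFun := planeRot θ
  map_add' p q := by simp only [planeRot, Prod.fst_add, Prod.snd_add, Prod.mk_add_mk]; ring_nf
  map_smul' a p := by
    simp only [planeRot, Prod.smul_fst, Prod.smul_snd, smul_eq_mul, RingHom.id_apply,
      Prod.smul_mk]
    ring_nf

lemma planeRot_planeRot_neg (θ : ℝ) (p : ℝ × ℝ) : planeRot θ (planeRot (-θ) p) = p := by
  simp only [planeRot, cos_neg, sin_neg, Prod.ext_iff]
  constructor
  · linear_combination p.1 * sin_sq_add_cos_sq θ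
  · linear_combination p.2 * sin_sq_add_cos_sq θ

lemma planeRot_fst_sq_add_snd_sq (θ : ℝ) (p : ℝ × ℝ) :
    (planeRot θ p).1 ^ 2 + (planeRot θ p).2 ^ 2 = p.1 ^ 2 + p.2 ^ 2 := by
  simp only [planeRot]
  linear_combination (p.1 ^ 2 + p.2 ^ 2) * sin_sq_add_cos_sq θ

lemma exists_planeRot_eq (u : ℝ × ℝ) : ∃ θ r : ℝ, 0 ≤ r ∧ planeRot θ (r, 0) = u := by
  refine ⟨Complex.arg ⟨u.1, u.2⟩, ‖(⟨u.1, u.2⟩ : ℂ)‖, norm_nonneg _, ?_⟩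
  simp only [planeRot, mul_zero, sub_zero, add_zero, mul_comm _ ‖_‖, Complex.norm_mul_cos_arg,
    Complex.norm_mul_sin_arg]

lemma isRectangle_image_planeRot_closedBall_prod (θ x y a b : ℝ) :
    IsRectangle (planeRot θ '' closedBall x a ×ˢ closedBall y b) := by
  refine ⟨θ, x - a, x + a, y - b, y + b, ?_⟩
  simp only [rectD, dilInterval, one_mul, Real.closedBall_eq_Icc]
  congr 3 <;> ring

lemma exists_abs_le_mul_eq {a y k : ℝ} (hk : 0 ≤ k) (h : |y| ≤ k * |a|) :
    ∃ t, |t| ≤ k ∧ t * a = y := by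
  rcases eq_or_ne a 0 with rfl | ha
  · exact ⟨0, by simpa using hk, by simp_all⟩
  · exact ⟨y / a, by rwa [abs_div, div_le_iff₀ (abs_pos.2 ha)], div_mul_cancel₀ y ha⟩

lemma parallelogram_subset_closedBall_prod {r : ℝ} (hr : 0 ≤ r) (c w : ℝ × ℝ) :
    parallelogram c (r, 0) w ⊆ closedBall c.1 (r + |w.1|) ×ˢ closedBall c.2 |w.2| := by
  rintro _ ⟨⟨s, t⟩, ⟨hs, ht⟩, rfl⟩
  replace hs : |s| ≤ 1 := abs_le.2 hs
  replace ht : |t| ≤ 1 := abs_le.2 ht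
  simp only [mem_prod, mem_closedBall, Real.dist_eq, Prod.fst_add, Prod.snd_add,
    Prod.smul_fst, Prod.smul_snd, smul_eq_mul, mul_zero, zero_add, add_assoc,
    add_sub_cancel_left, abs_mul]
  refine ⟨?_, mul_le_of_le_one_left (abs_nonneg _) ht⟩
  calc |s * r + t * w.1| ≤ |s| * r + |t| * |w.1| := by
        simpa only [abs_mul, abs_of_nonneg hr] using abs_add_le (s * r) (t * w.1)
    _ ≤ r + |w.1| :=
        add_le_add (mul_le_of_le_one_left hr hs) (mul_le_of_le_one_left (abs_nonneg _) ht)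

lemma closedBall_prod_subset_parallelogram {r : ℝ} {c w : ℝ × ℝ} (hw : |w.1| ≤ r) :
    closedBall c.1 (r + |w.1|) ×ˢ closedBall c.2 |w.2| ⊆
      parallelogram c ((3 : ℝ) • (r, 0)) ((3 : ℝ) • w) := by
  rintro ⟨x, y⟩ ⟨hx, hy⟩
  rw [mem_closedBall, Real.dist_eq] at hx hy
  obtain ⟨t, ht, hty⟩ :=
    exists_abs_le_mul_eq (a := w.2) (y := y - c.2) zero_le_one (by rwa [one_mul])
  have hsx : |x - c.1 - t * w.1| ≤ 3 * |r| := by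
    have hr : 0 ≤ r := (abs_nonneg _).trans hw
    calc |x - c.1 - t * w.1| ≤ |x - c.1| + |t| * |w.1| := by
          simpa only [abs_mul] using abs_sub (x - c.1) (t * w.1)
      _ ≤ (r + |w.1|) + 1 * |w.1| := by gcongr
      _ ≤ 3 * |r| := by rw [abs_of_nonneg hr]; linarith
  obtain ⟨s, hs, hs_eq⟩ := exists_abs_le_mul_eq (by norm_num) hsx
  refine ⟨(s / 3, t / 3), ⟨abs_le.1 ?_, abs_le.1 ?_⟩, ?_⟩
  · rw [abs_div, abs_of_pos (three_pos : (0 : ℝ) < 3)]; linarith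
  · rw [abs_div, abs_of_pos (three_pos : (0 : ℝ) < 3)]; linarith
  · simp only [Prod.ext_iff, Prod.fst_add, Prod.snd_add, Prod.smul_fst, Prod.smul_snd,
      smul_eq_mul]
    constructor
    · linear_combination hs_eq
    · linear_combination hty

lemma exists_isRectangle_between_of_le {c u v : ℝ × ℝ}
    (h : v.1 ^ 2 + v.2 ^ 2 ≤ u.1 ^ 2 + u.2 ^ 2) :
    ∃ T, IsRectangle T ∧ parallelogram c u v ⊆ T ∧
      T ⊆ parallelogram c ((3 : ℝ) • u) ((3 : ℝ) • v) := by
  obtain ⟨θ, r, hr, rfl⟩ := exists_planeRot_eq u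
  have image_rot (c u v : ℝ × ℝ) : planeRot θ '' parallelogram c u v =
      parallelogram (planeRot θ c) (planeRot θ u) (planeRot θ v) :=
    (planeRotₗ θ).toAffineMap.image_parallelogram c u v
  have rot_smul (p : ℝ × ℝ) : (3 : ℝ) • planeRot θ p = planeRot θ ((3 : ℝ) • p) :=
    ((planeRotₗ θ).map_smul 3 p).symm
  obtain ⟨c, rfl⟩ : ∃ c', planeRot θ c' = c := ⟨_, planeRot_planeRot_neg θ c⟩
  obtain ⟨w, rfl⟩ : ∃ w, planeRot θ w = v := ⟨_, planeRot_planeRot_neg θ v⟩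
  have hw : |w.1| ≤ r := by
    rw [planeRot_fst_sq_add_snd_sq, planeRot_fst_sq_add_snd_sq] at h
    exact abs_le_of_sq_le_sq (by nlinarith [sq_nonneg w.2]) hr
  refine ⟨planeRot θ '' closedBall c.1 (r + |w.1|) ×ˢ closedBall c.2 |w.2|,
    isRectangle_image_planeRot_closedBall_prod _ _ _ _ _, ?_, ?_⟩
  · rw [← image_rot]
    exact image_mono (parallelogram_subset_closedBall_prod hr c w)
  · rw [rot_smul, rot_smul, ← image_rot]
    exact image_mono (closedBall_prod_subset_parallelogram hw)

lemma exists_isRectangle_between (c u v : ℝ × ℝ) :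
    ∃ T, IsRectangle T ∧ parallelogram c u v ⊆ T ∧
      T ⊆ parallelogram c ((3 : ℝ) • u) ((3 : ℝ) • v) := by
  rcases le_total (v.1 ^ 2 + v.2 ^ 2) (u.1 ^ 2 + u.2 ^ 2) with h | h
  · exact exists_isRectangle_between_of_le h
  · rw [parallelogram_comm c u, parallelogram_comm c ((3 : ℝ) • u)]
    exact exists_isRectangle_between_of_le h

theorem statement12 (L : (ℝ × ℝ) ≃ᵃ[ℝ] (ℝ × ℝ)) :
    ∃ T : Set (ℝ × ℝ), IsRectangle T ∧
      L '' (Set.Icc (0 : ℝ) 1 ×ˢ Set.Icc (0 : ℝ) 1) ⊆ T ∧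
      T ⊆ (fun p => L (1 / 2, 1 / 2) + (3 : ℝ) • (p - L (1 / 2, 1 / 2))) ''
        (L '' (Set.Icc (0 : ℝ) 1 ×ˢ Set.Icc (0 : ℝ) 1)) := by
  have hP : L '' (Icc (0 : ℝ) 1 ×ˢ Icc (0 : ℝ) 1) =
      parallelogram (L (1 / 2, 1 / 2)) (L.linear (1 / 2, 0)) (L.linear (0, 1 / 2)) := by
    rw [Icc_zero_one_prod_eq_parallelogram, ← L.coe_toAffineMap, AffineMap.image_parallelogram]
    rfl
  rw [hP, image_dilation_parallelogram]
  exact exists_isRectangle_between _ _ _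

end
end

section
/- Let T₁ and T₂ be rectangles in ℝ² with T₁ ∩ T₂ ≠ ∅. Then there exists a rectangle T such that T₁ ∩ T₂ ⊆ T ⊆ 100T₁ ∩ 100T₂, where 100Tᵢ denotes the dilation of Tᵢ by the factor 100 about its centre. -/
open MeasureTheory Real Set
open scoped ENNReal

noncomputable section

-- helpers
def cuAux (θ : ℝ) (p : ℝ × ℝ) : ℝ := Real.cos θ * p.1 + Real.sin θ * p.2
def cvAux (θ : ℝ) (p : ℝ × ℝ) : ℝ := -Real.sin θ * p.1 + Real.cos θ * p.2

lemma planeRot_coords (θ : ℝ) (p : ℝ × ℝ) : planeRot θ (cuAux θ p, cvAux θ p) = p := by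
  have h := Real.sin_sq_add_cos_sq θ
  apply Prod.ext <;> simp only [planeRot, cuAux, cvAux]
  · linear_combination p.1 * h
  · linear_combination p.2 * h

lemma cu_rot (θ ψ x y : ℝ) :
    cuAux θ (planeRot ψ (x, y)) = Real.cos (θ - ψ) * x + Real.sin (θ - ψ) * y := by
  simp [cuAux, planeRot, Real.cos_sub, Real.sin_sub]; ring

lemma cv_rot (θ ψ x y : ℝ) :
    cvAux θ (planeRot ψ (x, y)) = -Real.sin (θ - ψ) * x + Real.cos (θ - ψ) * y := by
  simp [cvAux, planeRot, Real.cos_sub, Real.sin_sub]; ring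

lemma dil1 (a b : ℝ) : dilInterval 1 a b = Set.Icc a b := by
  unfold dilInterval; congr 1 <;> ring

def rotL (θ : ℝ) : (ℝ × ℝ) →ₗ[ℝ] (ℝ × ℝ) where
  toFun := planeRot θ
  map_add' p q := by simp [planeRot, Prod.ext_iff]; constructor <;> ring
  map_smul' c p := by simp [planeRot, Prod.ext_iff, smul_eq_mul]; constructor <;> ring

def cuL (θ : ℝ) : (ℝ × ℝ) →ₗ[ℝ] ℝ where
  toFun := cuAux θ
  map_add' p q := by simp [cuAux]; ring
  map_smul' c p := by simp [cuAux, smul_eq_mul]; ring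

lemma continuous_planeRot (θ : ℝ) : Continuous (planeRot θ) := by
  unfold planeRot; fun_prop

lemma continuous_cuAux (θ : ℝ) : Continuous (cuAux θ) := by unfold cuAux; fun_prop

lemma continuous_cvAux (θ : ℝ) : Continuous (cvAux θ) := by unfold cvAux; fun_prop

lemma rectD_convex (θ a b c d : ℝ) : Convex ℝ (rectD 1 θ a b c d) := by
  have : rectD 1 θ a b c d = (rotL θ) '' (dilInterval 1 a b ×ˢ dilInterval 1 c d) := rfl
  rw [this]
  exact ((convex_Icc _ _).prod (convex_Icc _ _)).linear_image (rotL θ)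

lemma rectD_compact (θ a b c d : ℝ) : IsCompact (rectD 1 θ a b c d) := by
  rw [show rectD 1 θ a b c d = planeRot θ '' (dilInterval 1 a b ×ˢ dilInterval 1 c d) from rfl,
    dil1, dil1]
  exact ((isCompact_Icc).prod isCompact_Icc).image (continuous_planeRot θ)

lemma mem_rectD100 (θ a b c d : ℝ) (hab : a ≤ b) (hcd : c ≤ d) (r : ℝ × ℝ)
    (h1 : |cuAux θ r - (a+b)/2| ≤ 2 * (b - a) + (b-a)/2)
    (h2 : |cvAux θ r - (c+d)/2| ≤ 2 * (d - c) + (d-c)/2) :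
    r ∈ rectD 100 θ a b c d := by
  refine ⟨(cuAux θ r, cvAux θ r), ⟨?_, ?_⟩, planeRot_coords θ r⟩
  · rw [abs_le] at h1
    exact ⟨by simp only [dilInterval]; nlinarith, by nlinarith⟩
  · rw [abs_le] at h2
    exact ⟨by nlinarith, by nlinarith⟩

lemma aux_incl (K : Set (ℝ × ℝ)) (hne : K.Nonempty) (hconv : Convex ℝ K) (hcomp : IsCompact K)
    (ψ θ a b c d : ℝ) (hsub : K ⊆ rectD 1 θ a b c d)
    (h1 : sSup (cvAux ψ '' K) - sInf (cvAux ψ '' K) ≤ b - a)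
    (h2 : sSup (cvAux ψ '' K) - sInf (cvAux ψ '' K) ≤ d - c) :
    planeRot ψ '' (Set.Icc (sInf (cuAux ψ '' K)) (sSup (cuAux ψ '' K)) ×ˢ
      Set.Icc (sInf (cvAux ψ '' K)) (sSup (cvAux ψ '' K))) ⊆ rectD 100 θ a b c d := by
  have hEucomp : IsCompact (cuAux ψ '' K) := hcomp.image (continuous_cuAux ψ)
  have hEvcomp : IsCompact (cvAux ψ '' K) := hcomp.image (continuous_cvAux ψ)
  have hEune : (cuAux ψ '' K).Nonempty := hne.image _
  have hEuconv : Convex ℝ (cuAux ψ '' K) := hconv.linear_image (cuL ψ)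
  have hIcc : Set.Icc (sInf (cuAux ψ '' K)) (sSup (cuAux ψ '' K)) ⊆ cuAux ψ '' K := by
    intro x hx
    exact hEuconv.ordConnected.out (hEucomp.sInf_mem hEune) (hEucomp.sSup_mem hEune) hx
  rintro r ⟨⟨x, y⟩, ⟨hx, hy⟩, rfl⟩
  simp only [Set.mem_Icc] at hx hy
  obtain ⟨k, hkK, hkx⟩ := hIcc ⟨hx.1, hx.2⟩
  have hkT : k ∈ rectD 1 θ a b c d := hsub hkK
  rw [show rectD 1 θ a b c d = planeRot θ '' (dilInterval 1 a b ×ˢ dilInterval 1 c d) from rfl,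
    dil1, dil1] at hkT
  obtain ⟨⟨xk, yk⟩, ⟨hxk, hyk⟩, hkeq⟩ := hkT
  simp only [Set.mem_Icc] at hxk hyk
  have hab : a ≤ b := hxk.1.trans hxk.2
  have hcd : c ≤ d := hyk.1.trans hyk.2
  -- |t| bound
  have hcvk : cvAux ψ k ∈ cvAux ψ '' K := ⟨k, hkK, rfl⟩
  have hcvk1 : sInf (cvAux ψ '' K) ≤ cvAux ψ k := csInf_le hEvcomp.bddBelow hcvk
  have hcvk2 : cvAux ψ k ≤ sSup (cvAux ψ '' K) := le_csSup hEvcomp.bddAbove hcvk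
  have htb : |y - cvAux ψ k| ≤ sSup (cvAux ψ '' K) - sInf (cvAux ψ '' K) := by
    rw [abs_le]
    exact ⟨by linarith [hy.2], by linarith [hy.1]⟩
  -- coordinates of k
  have hk1 : cuAux θ k = xk := by rw [← hkeq, cu_rot]; simp
  have hk2 : cvAux θ k = yk := by rw [← hkeq, cv_rot]; simp
  have hkrep : planeRot ψ (x, cvAux ψ k) = k := by
    rw [← hkx]; exact planeRot_coords ψ k
  have hxrep : xk = Real.cos (θ - ψ) * x + Real.sin (θ - ψ) * cvAux ψ k := by
    rw [← hk1, ← hkrep, cu_rot, cv_rot]; simp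
  have hyrep : yk = -Real.sin (θ - ψ) * x + Real.cos (θ - ψ) * cvAux ψ k := by
    rw [← hk2, ← hkrep, cv_rot, cv_rot]; simp
  have hsin : |Real.sin (θ - ψ)| ≤ 1 := abs_sin_le_one _
  have hcos : |Real.cos (θ - ψ)| ≤ 1 := abs_cos_le_one _
  have habs1 : |Real.sin (θ - ψ) * (y - cvAux ψ k)| ≤ b - a := by
    rw [abs_mul]
    calc |Real.sin (θ - ψ)| * |y - cvAux ψ k| ≤ 1 * |y - cvAux ψ k| := by
          apply mul_le_mul_of_nonneg_right hsin (abs_nonneg _)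
      _ ≤ b - a := by rw [one_mul]; linarith
  have habs2 : |Real.cos (θ - ψ) * (y - cvAux ψ k)| ≤ d - c := by
    rw [abs_mul]
    calc |Real.cos (θ - ψ)| * |y - cvAux ψ k| ≤ 1 * |y - cvAux ψ k| := by
          apply mul_le_mul_of_nonneg_right hcos (abs_nonneg _)
      _ ≤ d - c := by rw [one_mul]; linarith
  have e1 : cuAux θ (planeRot ψ (x, y)) = xk + Real.sin (θ - ψ) * (y - cvAux ψ k) := by
    rw [cu_rot, hxrep]; ring
  have e2 : cvAux θ (planeRot ψ (x, y)) = yk + Real.cos (θ - ψ) * (y - cvAux ψ k) := by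
    rw [cv_rot, hyrep]; ring
  apply mem_rectD100 θ a b c d hab hcd
  · rw [e1, abs_le]
    rw [abs_le] at habs1
    exact ⟨by linarith [hxk.1, habs1.1], by linarith [hxk.2, habs1.2]⟩
  · rw [e2, abs_le]
    rw [abs_le] at habs2
    exact ⟨by linarith [hyk.1, habs2.1], by linarith [hyk.2, habs2.2]⟩

theorem statement13 (θ₁ a₁ b₁ c₁ d₁ θ₂ a₂ b₂ c₂ d₂ : ℝ)
    (hne : (rectD 1 θ₁ a₁ b₁ c₁ d₁ ∩ rectD 1 θ₂ a₂ b₂ c₂ d₂).Nonempty) :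
    ∃ T : Set (ℝ × ℝ), IsRectangle T ∧
      rectD 1 θ₁ a₁ b₁ c₁ d₁ ∩ rectD 1 θ₂ a₂ b₂ c₂ d₂ ⊆ T ∧
      T ⊆ rectD 100 θ₁ a₁ b₁ c₁ d₁ ∩ rectD 100 θ₂ a₂ b₂ c₂ d₂ := by

  classical
  set K := rectD 1 θ₁ a₁ b₁ c₁ d₁ ∩ rectD 1 θ₂ a₂ b₂ c₂ d₂ with hKdef
  have hKne : K.Nonempty := hne
  have hsub1 : K ⊆ rectD 1 θ₁ a₁ b₁ c₁ d₁ := Set.inter_subset_left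
  have hsub2 : K ⊆ rectD 1 θ₂ a₂ b₂ c₂ d₂ := Set.inter_subset_right
  have hconv : Convex ℝ K := (rectD_convex _ _ _ _ _).inter (rectD_convex _ _ _ _ _)
  have hcomp : IsCompact K :=
    (rectD_compact θ₁ a₁ b₁ c₁ d₁).inter_right (rectD_compact θ₂ a₂ b₂ c₂ d₂).isClosed
  set W : ℝ → ℝ := fun ψ => sSup (cvAux ψ '' K) - sInf (cvAux ψ '' K) with hWdef
  have hWle : ∀ θ a b c d : ℝ, K ⊆ rectD 1 θ a b c d →
      W θ ≤ d - c ∧ W (θ + π / 2) ≤ b - a := by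
    intro θ a b c d hs
    have hmem : ∀ p ∈ K, (cuAux θ p ∈ Set.Icc a b ∧ cvAux θ p ∈ Set.Icc c d) := by
      intro p hp
      have := hs hp
      rw [show rectD 1 θ a b c d = planeRot θ '' (dilInterval 1 a b ×ˢ dilInterval 1 c d)
        from rfl, dil1, dil1] at this
      obtain ⟨⟨x, y⟩, ⟨hx, hy⟩, rfl⟩ := this
      have e1 : cuAux θ (planeRot θ (x, y)) = x := by
        rw [cu_rot]; simp
      have e2 : cvAux θ (planeRot θ (x, y)) = y := by
        rw [cv_rot]; simp
      rw [e1, e2]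
      exact ⟨hx, hy⟩
    constructor
    · have hs1 : sSup (cvAux θ '' K) ≤ d :=
        csSup_le (hKne.image _) (by rintro _ ⟨p, hp, rfl⟩; exact ((hmem p hp).2).2)
      have hs2 : c ≤ sInf (cvAux θ '' K) :=
        le_csInf (hKne.image _) (by rintro _ ⟨p, hp, rfl⟩; exact ((hmem p hp).2).1)
      simp only [hWdef]
      linarith
    · have hpi : θ + π / 2 - θ = π / 2 := by ring
      have hcv : ∀ p : ℝ × ℝ, p ∈ K → cvAux (θ + π / 2) p ∈ Set.Icc (-b) (-a) := by
        intro p hp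
        have hrep : planeRot θ (cuAux θ p, cvAux θ p) = p := planeRot_coords θ p
        have := cv_rot (θ + π / 2) θ (cuAux θ p) (cvAux θ p)
        rw [hrep, hpi] at this
        rw [this]
        simp only [Real.sin_pi_div_two, Real.cos_pi_div_two]
        have h1 := (hmem p hp).1.1
        have h2 := (hmem p hp).1.2
        constructor <;> [linarith; linarith]
      have hs1 : sSup (cvAux (θ + π / 2) '' K) ≤ -a :=
        csSup_le (hKne.image _) (by rintro _ ⟨p, hp, rfl⟩; exact (hcv p hp).2)
      have hs2 : -b ≤ sInf (cvAux (θ + π / 2) '' K) :=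
        le_csInf (hKne.image _) (by rintro _ ⟨p, hp, rfl⟩; exact (hcv p hp).1)
      simp only [hWdef]
      linarith
  obtain ⟨ψ, hψmem, hψmin⟩ :=
    Finset.exists_min_image ({θ₁, θ₂, θ₁ + π / 2, θ₂ + π / 2} : Finset ℝ) W ⟨θ₁, by simp⟩
  have h11 := hWle θ₁ a₁ b₁ c₁ d₁ hsub1
  have h22 := hWle θ₂ a₂ b₂ c₂ d₂ hsub2
  have hm1 : W ψ ≤ W θ₁ := hψmin θ₁ (by simp)
  have hm2 : W ψ ≤ W θ₂ := hψmin θ₂ (by simp)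
  have hm3 : W ψ ≤ W (θ₁ + π / 2) := hψmin _ (by simp)
  have hm4 : W ψ ≤ W (θ₂ + π / 2) := hψmin _ (by simp)
  refine ⟨planeRot ψ '' (Set.Icc (sInf (cuAux ψ '' K)) (sSup (cuAux ψ '' K)) ×ˢ
    Set.Icc (sInf (cvAux ψ '' K)) (sSup (cvAux ψ '' K))), ?_, ?_, ?_⟩
  · exact ⟨ψ, sInf (cuAux ψ '' K), sSup (cuAux ψ '' K), sInf (cvAux ψ '' K),
      sSup (cvAux ψ '' K), by simp only [rectD, dil1]⟩
  · intro p hp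
    have hbu : BddAbove (cuAux ψ '' K) := (hcomp.image (continuous_cuAux ψ)).bddAbove
    have hbu' : BddBelow (cuAux ψ '' K) := (hcomp.image (continuous_cuAux ψ)).bddBelow
    have hbv : BddAbove (cvAux ψ '' K) := (hcomp.image (continuous_cvAux ψ)).bddAbove
    have hbv' : BddBelow (cvAux ψ '' K) := (hcomp.image (continuous_cvAux ψ)).bddBelow
    exact ⟨(cuAux ψ p, cvAux ψ p),
      ⟨⟨csInf_le hbu' ⟨p, hp, rfl⟩, le_csSup hbu ⟨p, hp, rfl⟩⟩,
       ⟨csInf_le hbv' ⟨p, hp, rfl⟩, le_csSup hbv ⟨p, hp, rfl⟩⟩⟩,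
      planeRot_coords ψ p⟩
  · apply Set.subset_inter
    · exact aux_incl K hKne hconv hcomp ψ θ₁ a₁ b₁ c₁ d₁ hsub1
        (le_trans hm3 h11.2) (le_trans hm1 h11.1)
    · exact aux_incl K hKne hconv hcomp ψ θ₂ a₂ b₂ c₂ d₂ hsub2
        (le_trans hm4 h22.2) (le_trans hm2 h22.1)


end
end

section
/- For each d ≥ 2, K ≥ 1 and k > 0 there exist constants c₁ = c₁(d,K,k) > 0 and C₁ = C₁(d,K,k) such that the following holds. Let P : ℝ² → ℝ be a polynomial of degree at most d with no terms of degree ≤ 1 (no constant term and no linear terms), with all coefficients bounded in absolute value by K, and with at least one coefficient of absolute value ≥ k. Then there exists a point (x₀,y₀) in the closed unit ball B(0,1) ⊆ ℝ² such that the Hessian matrix D²P(x₀,y₀) has a real eigenvalue λ with c₁ ≤ |λ| ≤ C₁. -/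
open MeasureTheory Real Set
open scoped ENNReal

noncomputable section

/-! Coefficient vectors of polynomials with monomials of degree between `2` and `d` form a
finite-dimensional space, and the hypotheses place the coefficient vector of `P` in the compact
annulus `k ≤ ‖c‖ ≤ K`. Fix a grid of `(d + 1)²` points in `[0, 1/2]²`. The sum over the grid of
the absolute values of the second partial derivatives is continuous in `c`, and positive on the
annulus: if all second partials vanish on the grid they vanish identically (combinatorial
Nullstellensatz), so the polynomial is affine, hence zero. By compactness the sum lies in some
`[ε, M]` with `ε > 0`, so at some grid point the Hessian entries have total size at least
`ε / (d + 1)²`. Finally, the eigenvalue of larger modulus of a symmetric `2 × 2` matrix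
dominates each entry and is at most their sum. -/

open MvPolynomial Finset
open scoped Matrix

namespace Finsupp

variable {σ : Type*}

theorem exists_eq_add_single_of_degree_pos {μ : σ →₀ ℕ} (hμ : 0 < μ.degree) :
    ∃ i ν, μ = ν + single i 1 := by
  obtain ⟨i, hi⟩ : ∃ i, i ∈ μ.support := support_nonempty_iff.mpr (by rintro rfl; simp at hμ)
  exact ⟨i, μ - single i 1, (tsub_add_cancel_of_le (single_le_iff.mpr
    (Nat.one_le_iff_ne_zero.mpr (mem_support_iff.mp hi)))).symm⟩

def degreeIccFinset (σ : Type*) [Finite σ] (a b : ℕ) : Finset (σ →₀ ℕ) :=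
  ((finite_of_degree_le b).subset fun _ hμ => hμ.2 :
    {μ : σ →₀ ℕ | a ≤ μ.degree ∧ μ.degree ≤ b}.Finite).toFinset

@[simp]
theorem mem_degreeIccFinset [Finite σ] {a b : ℕ} {μ : σ →₀ ℕ} :
    μ ∈ degreeIccFinset σ a b ↔ a ≤ μ.degree ∧ μ.degree ≤ b := by
  simp [degreeIccFinset]

end Finsupp

namespace MvPolynomial

section CommSemiring

variable {σ R : Type*} [CommSemiring R]

theorem pderiv_pderiv_comm (i j : σ) (p : MvPolynomial σ R) :
    pderiv i (pderiv j p) = pderiv j (pderiv i p) := by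
  obtain rfl | hij := eq_or_ne i j
  · rfl
  ext m
  simp only [coeff_pderiv, add_right_comm m (Finsupp.single i 1), Finsupp.add_apply,
    Finsupp.single_eq_of_ne hij, Finsupp.single_eq_of_ne hij.symm, add_zero]
  ring

theorem degreeOf_pderiv_le (i j : σ) (p : MvPolynomial σ R) :
    (pderiv i p).degreeOf j ≤ p.degreeOf j := by
  refine degreeOf_le_iff.mpr fun m hm => ?_
  rw [mem_support_iff, coeff_pderiv] at hm
  calc m j ≤ (m + Finsupp.single i 1 : σ →₀ ℕ) j := by simp
    _ ≤ p.degreeOf j := monomial_le_degreeOf j (mem_support_iff.mpr (left_ne_zero_of_mul hm))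

theorem coeff_eq_zero_of_pderiv_pderiv_eq_zero [NoZeroDivisors R] [CharZero R]
    {p : MvPolynomial σ R} (hp : ∀ i j, pderiv i (pderiv j p) = 0) {μ : σ →₀ ℕ}
    (hμ : 2 ≤ μ.degree) : coeff μ p = 0 := by
  obtain ⟨i, ν, rfl⟩ := Finsupp.exists_eq_add_single_of_degree_pos (by omega : 0 < μ.degree)
  obtain ⟨j, ρ, rfl⟩ := Finsupp.exists_eq_add_single_of_degree_pos
    (by simp at hμ; omega : 0 < ν.degree)
  have h := congrArg (coeff ρ) (hp j i)
  simpa only [coeff_pderiv, coeff_zero, mul_eq_zero, Nat.cast_add_one_ne_zero, or_false] using h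

theorem support_subset_degreeIccFinset [Finite σ] {p : MvPolynomial σ R} {a b : ℕ}
    (hlow : ∀ μ : σ →₀ ℕ, μ.degree < a → coeff μ p = 0) (hdeg : p.totalDegree ≤ b) :
    p.support ⊆ Finsupp.degreeIccFinset σ a b := fun μ hμ =>
  Finsupp.mem_degreeIccFinset.mpr
    ⟨not_lt.mp fun h => mem_support_iff.mp hμ (hlow μ h), (le_totalDegree hμ).trans hdeg⟩

def ofCoeffs (s : Finset (σ →₀ ℕ)) : (s → R) →ₗ[R] MvPolynomial σ R :=
  ∑ μ : s, (monomial (μ : σ →₀ ℕ)).comp (LinearMap.proj μ)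

theorem ofCoeffs_apply (s : Finset (σ →₀ ℕ)) (c : s → R) :
    ofCoeffs s c = ∑ μ : s, monomial (μ : σ →₀ ℕ) (c μ) := by
  simp [ofCoeffs]

theorem coeff_ofCoeffs (s : Finset (σ →₀ ℕ)) (c : s → R) (μ : s) :
    coeff μ (ofCoeffs s c) = c μ := by
  classical
  simp [ofCoeffs_apply, coeff_sum, coeff_monomial]

theorem coeff_ofCoeffs_of_notMem {s : Finset (σ →₀ ℕ)} (c : s → R) {μ : σ →₀ ℕ} (hμ : μ ∉ s) :
    coeff μ (ofCoeffs s c) = 0 := by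
  classical
  simp only [ofCoeffs_apply, coeff_sum, coeff_monomial]
  exact sum_eq_zero fun ν _ => if_neg fun h : (ν : σ →₀ ℕ) = μ => hμ (h ▸ ν.2)

theorem ofCoeffs_coeff {s : Finset (σ →₀ ℕ)} {p : MvPolynomial σ R} (hp : p.support ⊆ s) :
    ofCoeffs s (fun μ => coeff μ p) = p := by
  ext μ
  by_cases hμ : μ ∈ s
  · exact coeff_ofCoeffs s _ ⟨μ, hμ⟩
  · rw [coeff_ofCoeffs_of_notMem _ hμ, eq_comm, ← notMem_support_iff]
    exact fun h => hμ (hp h)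

theorem degreeOf_ofCoeffs_le {s : Finset (σ →₀ ℕ)} (c : s → R) {i : σ} {n : ℕ}
    (hs : ∀ μ ∈ s, μ i ≤ n) : (ofCoeffs s c).degreeOf i ≤ n := by
  refine degreeOf_le_iff.mpr fun μ hμ => hs μ ?_
  by_contra h
  exact mem_support_iff.mp hμ (coeff_ofCoeffs_of_notMem c h)

end CommSemiring

section Real

variable {σ : Type*}

theorem abs_coeff_le_norm_coeff {s : Finset (σ →₀ ℕ)} {p : MvPolynomial σ ℝ}
    (hp : p.support ⊆ s) (μ : σ →₀ ℕ) : |coeff μ p| ≤ ‖fun ν : s => coeff (ν : σ →₀ ℕ) p‖ := by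
  by_cases hμ : μ ∈ s
  · exact norm_le_pi_norm (fun ν : s => coeff (ν : σ →₀ ℕ) p) ⟨μ, hμ⟩
  · rw [notMem_support_iff.mp fun h => hμ (hp h), abs_zero]
    exact norm_nonneg _

theorem coeff_mem_closedBall_diff_ball {s : Finset (σ →₀ ℕ)} {p : MvPolynomial σ ℝ}
    (hp : p.support ⊆ s) {K k : ℝ} (hK : ∀ μ, |coeff μ p| ≤ K) (hk : ∃ μ, k ≤ |coeff μ p|) :
    (fun ν : s => coeff (ν : σ →₀ ℕ) p) ∈ Metric.closedBall 0 K \ Metric.ball 0 k := by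
  obtain ⟨μ, hμ⟩ := hk
  refine ⟨mem_closedBall_zero_iff.mpr ?_, fun h => ?_⟩
  · exact (pi_norm_le_iff_of_nonneg ((abs_nonneg _).trans (hK 0))).mpr fun ν => hK ν
  · exact (mem_ball_zero_iff.mp h).not_ge (hμ.trans (abs_coeff_le_norm_coeff hp μ))

variable [Fintype σ]

def hessAbsSum (p : MvPolynomial σ ℝ) (x : σ → ℝ) : ℝ :=
  ∑ i, ∑ j, |eval x (pderiv i (pderiv j p))|

theorem hessAbsSum_nonneg (p : MvPolynomial σ ℝ) (x : σ → ℝ) : 0 ≤ hessAbsSum p x :=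
  sum_nonneg fun _ _ => sum_nonneg fun _ _ => abs_nonneg _

theorem abs_eval_pderiv_pderiv_le_hessAbsSum (p : MvPolynomial σ ℝ) (x : σ → ℝ) (i j : σ) :
    |eval x (pderiv i (pderiv j p))| ≤ hessAbsSum p x := by
  unfold hessAbsSum
  exact (single_le_sum (f := fun j => |eval x (pderiv i (pderiv j p))|)
    (fun _ _ => abs_nonneg _) (mem_univ j)).trans
    (single_le_sum (f := fun i => ∑ j, |eval x (pderiv i (pderiv j p))|)
      (fun _ _ => sum_nonneg fun _ _ => abs_nonneg _) (mem_univ i))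

theorem continuous_hessAbsSum_ofCoeffs (s : Finset (σ →₀ ℕ)) (x : σ → ℝ) :
    Continuous fun c : s → ℝ => hessAbsSum (ofCoeffs s c) x := by
  refine continuous_finsetSum _ fun i _ => continuous_finsetSum _ fun j _ => ?_
  have hlin := LinearMap.continuous_of_finiteDimensional ((aeval x).toLinearMap ∘ₗ
    (pderiv i).toLinearMap ∘ₗ (pderiv j).toLinearMap ∘ₗ ofCoeffs (R := ℝ) s)
  simpa [coe_aeval_eq_eval] using hlin.abs

theorem pderiv_pderiv_eq_zero_of_hessAbsSum_eq_zero {p : MvPolynomial σ ℝ} {S : Finset ℝ}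
    (hdeg : ∀ i, p.degreeOf i < #S) (hp : ∀ x : σ → ℝ, (∀ i, x i ∈ S) → hessAbsSum p x = 0)
    (i j : σ) : pderiv i (pderiv j p) = 0 := by
  refine eq_zero_of_eval_zero_at_prod_finset _ (fun _ => S)
    (fun k => ((degreeOf_pderiv_le _ _ _).trans (degreeOf_pderiv_le _ _ _)).trans_lt (hdeg k))
    fun x hx => ?_
  exact abs_nonpos_iff.mp ((abs_eval_pderiv_pderiv_le_hessAbsSum p x i j).trans (hp x hx).le)

theorem sum_hessAbsSum_ofCoeffs_pos [DecidableEq σ] {s : Finset (σ →₀ ℕ)} {S : Finset ℝ} {n : ℕ}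
    (hs : ∀ μ ∈ s, 2 ≤ μ.degree ∧ μ.degree ≤ n) (hS : n < #S) {c : s → ℝ} (hc : c ≠ 0) :
    0 < ∑ x ∈ Fintype.piFinset fun _ => S, hessAbsSum (ofCoeffs s c) x := by
  refine (sum_nonneg fun x _ => hessAbsSum_nonneg _ x).lt_of_ne fun hzero => hc ?_
  have hdeg i : (ofCoeffs s c).degreeOf i < #S :=
    (degreeOf_ofCoeffs_le c fun μ hμ => (Finsupp.le_degree i μ).trans (hs μ hμ).2).trans_lt hS
  have hvan := pderiv_pderiv_eq_zero_of_hessAbsSum_eq_zero hdeg fun x hx =>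
    (sum_eq_zero_iff_of_nonneg fun x _ => hessAbsSum_nonneg _ x).mp hzero.symm x
      (Fintype.mem_piFinset.mpr hx)
  funext μ
  rw [← coeff_ofCoeffs s c μ]
  exact coeff_eq_zero_of_pderiv_pderiv_eq_zero hvan (hs μ μ.2).1

end Real

end MvPolynomial

theorem Finset.exists_div_card_le_of_le_sum {ι : Type*} {s : Finset ι} (hs : s.Nonempty)
    {f : ι → ℝ} {a : ℝ} (h : a ≤ ∑ i ∈ s, f i) : ∃ i ∈ s, a / #s ≤ f i := by
  refine exists_le_of_sum_le hs ?_
  rwa [sum_const, nsmul_eq_mul, mul_div_cancel₀ _ (by exact_mod_cast hs.card_pos.ne')]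

theorem IsCompact.exists_forall_pos_le_le {X : Type*} [TopologicalSpace X] {T : Set X}
    {F : X → ℝ} (hT : IsCompact T) (hF : ContinuousOn F T) (hpos : ∀ x ∈ T, 0 < F x) :
    ∃ ε > 0, ∃ M, ∀ x ∈ T, ε ≤ F x ∧ F x ≤ M := by
  obtain ⟨M, hM⟩ := hT.bddAbove_image hF
  rcases T.eq_empty_or_nonempty with rfl | hne
  · exact ⟨1, one_pos, M, by simp⟩
  obtain ⟨x₀, hx₀, hmin⟩ := hT.exists_isMinOn hne hF
  exact ⟨F x₀, hpos x₀ hx₀, M, fun x hx => ⟨hmin hx, hM (Set.mem_image_of_mem F hx)⟩⟩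

theorem Matrix.exists_ne_zero_mulVec_eq_smul_of_sub_mul_sub_eq_sq {R : Type*} [CommRing R]
    [Nontrivial R] {a b c l : R} (hl : (a - l) * (c - l) = b ^ 2) :
    ∃ v : Fin 2 → R, v ≠ 0 ∧ !![a, b; b, c] *ᵥ v = l • v := by
  by_cases hv : b = 0 ∧ l = a
  · obtain ⟨rfl, rfl⟩ := hv
    refine ⟨![1, 0], fun h => one_ne_zero (congrFun h 0), ?_⟩
    ext i; fin_cases i <;> simp
  · refine ⟨![b, l - a], fun h => hv ⟨congrFun h 0, sub_eq_zero.mp (congrFun h 1)⟩, ?_⟩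
    ext i; fin_cases i
    · simp; ring
    · simp; linear_combination (-1 : R) * hl

theorem Real.exists_large_root_sub_mul_sub_eq_sq (a b c : ℝ) :
    ∃ l : ℝ, (a - l) * (c - l) = b ^ 2 ∧
      |a| ≤ |l| ∧ |b| ≤ |l| ∧ |c| ≤ |l| ∧ |l| ≤ |a| + |b| + |c| := by
  set t := (a + c) / 2 with ht
  set s := √(((a - c) / 2) ^ 2 + b ^ 2)
  have hs2 : s ^ 2 = ((a - c) / 2) ^ 2 + b ^ 2 := Real.sq_sqrt (by positivity)
  have hs0 : 0 ≤ s := Real.sqrt_nonneg _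
  have hb : |b| ≤ s := Real.abs_le_sqrt (by nlinarith)
  have hac : |(a - c) / 2| ≤ s := Real.abs_le_sqrt (by nlinarith)
  have hsle : s ≤ |(a - c) / 2| + |b| := by
    refine Real.sqrt_le_iff.mpr ⟨by positivity, ?_⟩
    nlinarith [sq_abs ((a - c) / 2), sq_abs b, mul_nonneg (abs_nonneg ((a - c) / 2)) (abs_nonneg b)]
  -- the root `t ± s` of larger modulus
  obtain ⟨l, hl, habs⟩ : ∃ l, (l - t) ^ 2 = s ^ 2 ∧ |l| = |t| + s := by
    rcases le_or_gt 0 t with h | h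
    · exact ⟨t + s, by ring, by rw [abs_of_nonneg (by linarith), abs_of_nonneg h]⟩
    · exact ⟨t - s, by ring, by rw [abs_of_neg (by linarith), abs_of_neg h]; ring⟩
  refine ⟨l, by linear_combination hl + hs2 + (2 * l - t - (a + c) / 2) * ht, ?_, ?_, ?_, ?_⟩ <;>
    rw [habs]
  · cases abs_cases t <;> cases abs_cases a <;> cases abs_cases ((a - c) / 2) <;> linarith
  · linarith [abs_nonneg t]
  · cases abs_cases t <;> cases abs_cases c <;> cases abs_cases ((a - c) / 2) <;> linarith
  · cases abs_cases t <;> cases abs_cases a <;> cases abs_cases c <;>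
      cases abs_cases ((a - c) / 2) <;> linarith

theorem exists_eigenpair_hessian (P : MvPolynomial (Fin 2) ℝ) (x : Fin 2 → ℝ) :
    ∃ (lam : ℝ) (v : Fin 2 → ℝ), v ≠ 0 ∧
      !![pev (Pdx (Pdx P)) (x 0, x 1), pev (Pdy (Pdx P)) (x 0, x 1);
         pev (Pdx (Pdy P)) (x 0, x 1), pev (Pdy (Pdy P)) (x 0, x 1)] *ᵥ v = lam • v ∧
      hessAbsSum P x / 4 ≤ |lam| ∧ |lam| ≤ hessAbsSum P x := by
  obtain ⟨l, hl, ha, hb, hc, hup⟩ := Real.exists_large_root_sub_mul_sub_eq_sq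
    (eval x (pderiv 0 (pderiv 0 P))) (eval x (pderiv 0 (pderiv 1 P)))
    (eval x (pderiv 1 (pderiv 1 P)))
  obtain ⟨v, hv, hmul⟩ := Matrix.exists_ne_zero_mulVec_eq_smul_of_sub_mul_sub_eq_sq hl
  have hsum : hessAbsSum P x = |eval x (pderiv 0 (pderiv 0 P))| +
      2 * |eval x (pderiv 0 (pderiv 1 P))| + |eval x (pderiv 1 (pderiv 1 P))| := by
    simp only [hessAbsSum, Fin.sum_univ_two, pderiv_pderiv_comm (1 : Fin 2) 0 P]
    ring
  have hx : ![x 0, x 1] = x := by ext i; fin_cases i <;> rfl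
  refine ⟨l, v, hv, ?_, by linarith, by linarith [abs_nonneg (eval x (pderiv 0 (pderiv 1 P)))]⟩
  simpa only [pev, Pdx, Pdy, hx, pderiv_pderiv_comm (1 : Fin 2) 0 P] using hmul

theorem statement16_general (d : ℕ) (K k : ℝ) (hk : 0 < k) :
    ∃ c₁ C₁ : ℝ, 0 < c₁ ∧
      ∀ P : MvPolynomial (Fin 2) ℝ, P.totalDegree ≤ d →
      (∀ μ : Fin 2 →₀ ℕ, μ 0 + μ 1 ≤ 1 → MvPolynomial.coeff μ P = 0) →
      CoeffBdd P K →
      (∃ μ : Fin 2 →₀ ℕ, k ≤ |MvPolynomial.coeff μ P|) →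
      ∃ x₀ y₀ : ℝ, x₀ ^ 2 + y₀ ^ 2 ≤ 1 ∧
        ∃ (lam : ℝ) (v : Fin 2 → ℝ), v ≠ 0 ∧
          Matrix.mulVec
            !![pev (Pdx (Pdx P)) (x₀, y₀), pev (Pdy (Pdx P)) (x₀, y₀);
               pev (Pdx (Pdy P)) (x₀, y₀), pev (Pdy (Pdy P)) (x₀, y₀)] v = lam • v ∧
          c₁ ≤ |lam| ∧ |lam| ≤ C₁ := by
  obtain ⟨S, hS, hSd⟩ :=
    (Set.Icc_infinite (by norm_num : (0 : ℝ) < 1 / 2)).exists_subset_card_eq (d + 1)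
  set s := Finsupp.degreeIccFinset (Fin 2) 2 d
  set grid := Fintype.piFinset fun _ : Fin 2 => S
  have hgrid : #grid = (d + 1) ^ 2 := by simp [grid, hSd]
  obtain ⟨ε, hε, M, hF⟩ := ((isCompact_closedBall (0 : s → ℝ) K).diff
    Metric.isOpen_ball).exists_forall_pos_le_le
    (continuous_finsetSum grid fun x _ => continuous_hessAbsSum_ofCoeffs s x).continuousOn
    fun c hc => sum_hessAbsSum_ofCoeffs_pos (fun μ => Finsupp.mem_degreeIccFinset.mp)
      (by omega) fun h => hc.2 (by rw [h]; exact Metric.mem_ball_self hk)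
  refine ⟨ε / (4 * (d + 1) ^ 2), M, by positivity, fun P hPd hPlow hPK hPk => ?_⟩
  have hsupp : P.support ⊆ s := support_subset_degreeIccFinset (fun μ hμ => hPlow μ (by
    rw [Finsupp.degree_eq_sum, Fin.sum_univ_two] at hμ; omega)) hPd
  obtain ⟨hεP, hPM⟩ : ε ≤ ∑ x ∈ grid, hessAbsSum P x ∧ ∑ x ∈ grid, hessAbsSum P x ≤ M := by
    simpa only [ofCoeffs_coeff hsupp] using hF _ (coeff_mem_closedBall_diff_ball hsupp hPK hPk)
  obtain ⟨x, hx, hxε⟩ := exists_div_card_le_of_le_sum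
    (card_pos.mp (by rw [hgrid]; positivity)) hεP
  obtain ⟨l, v, hv, hmul, hl, hu⟩ := exists_eigenpair_hessian P x
  have hxS : ∀ i, x i ∈ Set.Icc (0 : ℝ) (1 / 2) := fun i => hS (Fintype.mem_piFinset.mp hx i)
  refine ⟨x 0, x 1, by nlinarith [(hxS 0).1, (hxS 0).2, (hxS 1).1, (hxS 1).2], l, v, hv, hmul,
    ?_, hu.trans ((single_le_sum (fun x _ => hessAbsSum_nonneg P x) hx).trans hPM)⟩
  calc ε / (4 * (d + 1) ^ 2) = ε / #grid / 4 := by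
        rw [hgrid, div_div, mul_comm]; push_cast; ring
    _ ≤ |l| := by linarith

theorem statement16 (d : ℕ) (hd : 2 ≤ d) (K k : ℝ) (hK : 1 ≤ K) (hk : 0 < k) :
    ∃ c₁ C₁ : ℝ, 0 < c₁ ∧
      ∀ P : MvPolynomial (Fin 2) ℝ, P.totalDegree ≤ d →
      (∀ μ : Fin 2 →₀ ℕ, μ 0 + μ 1 ≤ 1 → MvPolynomial.coeff μ P = 0) →
      CoeffBdd P K →
      (∃ μ : Fin 2 →₀ ℕ, k ≤ |MvPolynomial.coeff μ P|) →
      ∃ x₀ y₀ : ℝ, x₀ ^ 2 + y₀ ^ 2 ≤ 1 ∧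
        ∃ (lam : ℝ) (v : Fin 2 → ℝ), v ≠ 0 ∧
          Matrix.mulVec
            !![pev (Pdx (Pdx P)) (x₀, y₀), pev (Pdy (Pdx P)) (x₀, y₀);
               pev (Pdx (Pdy P)) (x₀, y₀), pev (Pdy (Pdy P)) (x₀, y₀)] v = lam • v ∧
          c₁ ≤ |lam| ∧ |lam| ≤ C₁ :=
  statement16_general d K k hk
end
end

section
/- Let P : ℝ² → ℝ be a bivariate polynomial, let ℓ be a straight line in ℝ², and let H be a closed half-plane with boundary ℓ such that N(P) ⊆ H, where N(P) = {(m,n) ∈ ℤ²_{≥0} : the coefficient of x^m y^n in P is nonzero}. Then: (1) N(det D²P) ⊆ H + H − (2,2) := {u + v − (2,2) : u, v ∈ H}, which is the closed half-plane with boundary ℓ′ := {u + v − (2,2) : u, v ∈ ℓ} lying on the same side as H; and (2) (det D²P)|_{ℓ′} = det D²(P|_ℓ), where for a line m, P|_m denotes the sum of those terms of P whose index (m-exponent, n-exponent) lies on m. -/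
open MeasureTheory Real Set
open scoped ENNReal

noncomputable section

open Classical in
/-- The sum of the terms of `P` whose exponent index `(m,n)` lies on the line
`{p : ℝ × ℝ | u.1 * p.1 + u.2 * p.2 = t}`. -/
def lineRestrict (u : ℝ × ℝ) (t : ℝ) (P : MvPolynomial (Fin 2) ℝ) :
    MvPolynomial (Fin 2) ℝ :=
  ∑ μ ∈ P.support,
    if u.1 * (μ 0 : ℝ) + u.2 * (μ 1 : ℝ) = t then
      MvPolynomial.monomial μ (MvPolynomial.coeff μ P) else 0

/-! The half-plane `H` is `{μ | u · μ ≤ t}`, so `P|_ℓ` is the weighted homogeneous component of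
`P` of weight `t` for the weights `u`, and the hypothesis bounds all weights of `P` by `t`.
Differentiating in `xᵢ` lowers every weight by exactly `uᵢ`, and in a product `A * B` whose
weights are bounded by `a` and `b` the component of weight `a + b` is the product of the top
components, because weights add. Applied to `P_xx P_yy - P_xy²` this gives both claims, with
`ℓ′ = {μ | u · μ = 2t - 2u₁ - 2u₂}`. -/

namespace MvPolynomial

open Finsupp

variable {σ R M : Type*} [CommSemiring R]

section CancelWeights

variable [AddCancelCommMonoid M] {w : σ → M}

theorem weightedHomogeneousComponent_pderiv (P : MvPolynomial σ R) {a a' : M} {i : σ}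
    (ha : a' + w i = a) :
    weightedHomogeneousComponent w a' (pderiv i P) =
      pderiv i (weightedHomogeneousComponent w a P) := by
  classical
  ext μ
  simp only [coeff_pderiv, coeff_weightedHomogeneousComponent, map_add, weight_single,
    one_smul, ← ha, add_left_inj, ite_mul, zero_mul]

end CancelWeights

section OrderedWeights

variable [AddCommMonoid M] [PartialOrder M] [IsOrderedCancelAddMonoid M] {w : σ → M}

theorem weight_le_of_mem_support_mul {A B : MvPolynomial σ R} {a b : M}
    (hA : ∀ μ ∈ A.support, weight w μ ≤ a) (hB : ∀ μ ∈ B.support, weight w μ ≤ b) :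
    ∀ μ ∈ (A * B).support, weight w μ ≤ a + b := by
  classical
  intro μ hμ
  obtain ⟨α, hα, β, hβ, rfl⟩ := Finset.mem_add.mp (support_mul A B hμ)
  rw [map_add]
  exact add_le_add (hA α hα) (hB β hβ)

theorem weight_le_of_mem_support_pderiv {P : MvPolynomial σ R} {a a' : M} {i : σ}
    (hP : ∀ μ ∈ P.support, weight w μ ≤ a) (ha : a' + w i = a) :
    ∀ μ ∈ (pderiv i P).support, weight w μ ≤ a' := by
  intro μ hμ
  rw [mem_support_iff, coeff_pderiv] at hμ
  have h := hP _ (mem_support_iff.mpr (left_ne_zero_of_mul hμ))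
  rw [map_add, weight_single, one_smul, ← ha] at h
  exact le_of_add_le_add_right h

theorem weightedHomogeneousComponent_mul_of_le {A B : MvPolynomial σ R} {a b : M}
    (hA : ∀ μ ∈ A.support, weight w μ ≤ a) (hB : ∀ μ ∈ B.support, weight w μ ≤ b) :
    weightedHomogeneousComponent w (a + b) (A * B) =
      weightedHomogeneousComponent w a A * weightedHomogeneousComponent w b B := by
  classical
  ext μ
  rw [coeff_weightedHomogeneousComponent]
  split_ifs with hμ
  · rw [coeff_mul, coeff_mul]
    refine Finset.sum_congr rfl fun x hx => ?_
    rw [coeff_weightedHomogeneousComponent, coeff_weightedHomogeneousComponent]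
    by_cases h1 : coeff x.1 A = 0
    · simp [h1]
    by_cases h2 : coeff x.2 B = 0
    · simp [h2]
    have hsum : weight w x.1 + weight w x.2 = a + b := by
      rw [← map_add, Finset.HasAntidiagonal.mem_antidiagonal.mp hx, hμ]
    obtain ⟨rfl, rfl⟩ := (add_eq_add_iff_eq_and_eq (hA _ (mem_support_iff.mpr h1))
      (hB _ (mem_support_iff.mpr h2))).mp hsum
    simp
  · exact (((weightedHomogeneousComponent_isWeightedHomogeneous a A).mul
      (weightedHomogeneousComponent_isWeightedHomogeneous b B)).coeff_eq_zero μ hμ).symm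

end OrderedWeights

section WeightGroup

variable [AddCommGroup M] {w : σ → M}

theorem weight_le_of_mem_support_pderiv_pderiv [PartialOrder M] [IsOrderedAddMonoid M]
    {P : MvPolynomial σ R} {t : M}
    (hP : ∀ μ ∈ P.support, weight w μ ≤ t) (i j : σ) :
    ∀ μ ∈ (pderiv j (pderiv i P)).support, weight w μ ≤ t - w i - w j :=
  weight_le_of_mem_support_pderiv (weight_le_of_mem_support_pderiv hP (sub_add_cancel _ _))
    (sub_add_cancel _ _)

theorem weightedHomogeneousComponent_pderiv_pderiv (P : MvPolynomial σ R) (t : M) (i j : σ) :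
    weightedHomogeneousComponent w (t - w i - w j) (pderiv j (pderiv i P)) =
      pderiv j (pderiv i (weightedHomogeneousComponent w t P)) := by
  rw [weightedHomogeneousComponent_pderiv _ (sub_add_cancel _ _),
    weightedHomogeneousComponent_pderiv _ (sub_add_cancel _ _)]

end WeightGroup

end MvPolynomial

open MvPolynomial Finsupp

section Hessian

variable {M : Type*} [AddCommGroup M] [PartialOrder M] [IsOrderedAddMonoid M] {w : Fin 2 → M}
  {P : MvPolynomial (Fin 2) ℝ} {t : M}

theorem weight_le_of_mem_support_hessDet (hP : ∀ μ ∈ P.support, weight w μ ≤ t) :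
    ∀ μ ∈ (hessDet P).support, weight w μ ≤ 2 • (t - w 0 - w 1) := by
  intro μ hμ
  rcases Finset.mem_union.mp (support_sub _ _ _ hμ) with h | h
  · convert weight_le_of_mem_support_mul (weight_le_of_mem_support_pderiv_pderiv hP 0 0)
      (weight_le_of_mem_support_pderiv_pderiv hP 1 1) μ h using 1
    abel
  · rw [sq] at h
    rw [two_nsmul]
    exact weight_le_of_mem_support_mul (weight_le_of_mem_support_pderiv_pderiv hP 0 1)
      (weight_le_of_mem_support_pderiv_pderiv hP 0 1) μ h

theorem weightedHomogeneousComponent_hessDet (hP : ∀ μ ∈ P.support, weight w μ ≤ t) :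
    weightedHomogeneousComponent w (2 • (t - w 0 - w 1)) (hessDet P) =
      hessDet (weightedHomogeneousComponent w t P) := by
  have hxx_yy : 2 • (t - w 0 - w 1) = (t - w 0 - w 0) + (t - w 1 - w 1) := by abel
  simp only [hessDet, Pdx, Pdy, sq, map_sub]
  congr 1
  · rw [hxx_yy, weightedHomogeneousComponent_mul_of_le
      (weight_le_of_mem_support_pderiv_pderiv hP 0 0)
      (weight_le_of_mem_support_pderiv_pderiv hP 1 1),
      weightedHomogeneousComponent_pderiv_pderiv, weightedHomogeneousComponent_pderiv_pderiv]
  · rw [two_nsmul, weightedHomogeneousComponent_mul_of_le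
      (weight_le_of_mem_support_pderiv_pderiv hP 0 1)
      (weight_le_of_mem_support_pderiv_pderiv hP 0 1),
      weightedHomogeneousComponent_pderiv_pderiv]

end Hessian

theorem weight_pair (u : ℝ × ℝ) (μ : Fin 2 →₀ ℕ) :
    weight ![u.1, u.2] μ = u.1 * (μ 0 : ℝ) + u.2 * (μ 1 : ℝ) := by
  simp [weight_eq_sum, Fin.sum_univ_two, mul_comm]

theorem lineRestrict_eq_weightedHomogeneousComponent (u : ℝ × ℝ) (t : ℝ)
    (P : MvPolynomial (Fin 2) ℝ) :
    lineRestrict u t P = weightedHomogeneousComponent ![u.1, u.2] t P := by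
  rw [weightedHomogeneousComponent_apply, Finset.sum_filter]
  simp only [lineRestrict, weight_pair]

theorem statement18_general (P : MvPolynomial (Fin 2) ℝ) (u : ℝ × ℝ) (t : ℝ)
    (hH : ∀ μ ∈ P.support, u.1 * (μ 0 : ℝ) + u.2 * (μ 1 : ℝ) ≤ t) :
    (∀ μ ∈ (hessDet P).support,
      u.1 * (μ 0 : ℝ) + u.2 * (μ 1 : ℝ) ≤ 2 * t - 2 * u.1 - 2 * u.2) ∧
    lineRestrict u (2 * t - 2 * u.1 - 2 * u.2) (hessDet P) =
      hessDet (lineRestrict u t P) := by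
  have hdeg : 2 * t - 2 * u.1 - 2 * u.2 = 2 • (t - ![u.1, u.2] 0 - ![u.1, u.2] 1) := by
    simp only [Matrix.cons_val_zero, Matrix.cons_val_one, nsmul_eq_mul]
    ring
  simp only [← weight_pair] at hH ⊢
  rw [hdeg, lineRestrict_eq_weightedHomogeneousComponent,
    lineRestrict_eq_weightedHomogeneousComponent]
  exact ⟨weight_le_of_mem_support_hessDet hH, weightedHomogeneousComponent_hessDet hH⟩

theorem statement18 (P : MvPolynomial (Fin 2) ℝ) (u : ℝ × ℝ) (hu : u ≠ 0) (t : ℝ)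
    (hH : ∀ μ ∈ P.support, u.1 * (μ 0 : ℝ) + u.2 * (μ 1 : ℝ) ≤ t) :
    (∀ μ ∈ (hessDet P).support,
      u.1 * (μ 0 : ℝ) + u.2 * (μ 1 : ℝ) ≤ 2 * t - 2 * u.1 - 2 * u.2) ∧
    lineRestrict u (2 * t - 2 * u.1 - 2 * u.2) (hessDet P) =
      hessDet (lineRestrict u t P) :=
  statement18_general P u t hH

end
end
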